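/- Let B be a symmetric irreducible nonsingular M-matrix, β > 0, λ > λ_min(B), and let {u_l} be the monotone Newton iterates converging to the positive solution u* of β·diag(u^[2])u + Bu = λu, starting from u₀ satisfying the standard conditions. Suppose the map r(u) = β·diag(u^[2])u + Bu − λu has Jacobian ∇r(u) = 3β·diag(u^[2]) + B − λI whose derivative is Lipschitz on the order interval [u*, u₀] with constant M₁. Then for any l with u* < u_{l+1} < u_l < u₀, ‖r(u_{l+1})‖ ≤ (M₁ / (8β²·min(u*)⁴))·‖r(u_l)‖², i.e., the Newton iteration converges locally quadratically with explicit constant. -/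

import Mathlib

open Matrix Filter Topology

/-- Spectral radius of a real matrix (over its complex spectrum). -/
noncomputable def specRad {n : ℕ} (A : Matrix (Fin n) (Fin n) ℝ) : ℝ :=
  sSup {r : ℝ | ∃ μ : ℂ, μ ∈ spectrum ℂ (A.map (fun x => (x : ℂ))) ∧ r = ‖μ‖}

/-- Entrywise nonnegative matrix. -/
def MatNonneg {n : ℕ} (A : Matrix (Fin n) (Fin n) ℝ) : Prop := ∀ i j, 0 ≤ A i j

/-- `B` is an M-matrix: `B = s•I - A` with `A ≥ 0` and `s ≥ ρ(A)`. -/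
def IsMMat {n : ℕ} (B : Matrix (Fin n) (Fin n) ℝ) : Prop :=
  ∃ s A, MatNonneg A ∧ specRad A ≤ s ∧ B = s • (1 : Matrix (Fin n) (Fin n) ℝ) - A

/-- `B` is a nonsingular M-matrix: `B = s•I - A` with `A ≥ 0` and `s > ρ(A)`. -/
def IsNsMMat {n : ℕ} (B : Matrix (Fin n) (Fin n) ℝ) : Prop :=
  ∃ s A, MatNonneg A ∧ specRad A < s ∧ B = s • (1 : Matrix (Fin n) (Fin n) ℝ) - A

/-- Irreducibility: no nonempty proper index set `I` with `B i j = 0` for `i ∈ I`, `j ∉ I`. -/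
def MatIrred {n : ℕ} (B : Matrix (Fin n) (Fin n) ℝ) : Prop :=
  ¬ ∃ I : Finset (Fin n), I.Nonempty ∧ I ≠ Finset.univ ∧ ∀ i ∈ I, ∀ j ∉ I, B i j = 0

/-- `A(u) = β·diag(u^[2]) + B`. -/
noncomputable def AU {n : ℕ} (β : ℝ) (B : Matrix (Fin n) (Fin n) ℝ) (u : Fin n → ℝ) :
    Matrix (Fin n) (Fin n) ℝ :=
  β • Matrix.diagonal (fun i => u i ^ 2) + B

/-- Jacobian `J(u,λ) = 3β·diag(u^[2]) + B - λI`. -/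
noncomputable def JU {n : ℕ} (β lam : ℝ) (B : Matrix (Fin n) (Fin n) ℝ) (u : Fin n → ℝ) :
    Matrix (Fin n) (Fin n) ℝ :=
  (3 * β) • Matrix.diagonal (fun i => u i ^ 2) + B - lam • (1 : Matrix (Fin n) (Fin n) ℝ)

/-- Smallest (real) eigenvalue. -/
noncomputable def smallestEig {n : ℕ} (B : Matrix (Fin n) (Fin n) ℝ) : ℝ :=
  sInf {μ : ℝ | ∃ v : Fin n → ℝ, v ≠ 0 ∧ B.mulVec v = μ • v}

/-- Largest (real) eigenvalue. -/
noncomputable def largestEig {n : ℕ} (B : Matrix (Fin n) (Fin n) ℝ) : ℝ :=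
  sSup {μ : ℝ | ∃ v : Fin n → ℝ, v ≠ 0 ∧ B.mulVec v = μ • v}

/-- Euclidean norm of a vector. -/
noncomputable def vecNorm {n : ℕ} (u : Fin n → ℝ) : ℝ := Real.sqrt (∑ i, u i ^ 2)

/-- 1-norm of a vector. -/
noncomputable def vecNorm1 {n : ℕ} (u : Fin n → ℝ) : ℝ := ∑ i, |u i|

/-- Spectral (operator 2-) norm of a matrix. -/
noncomputable def matNorm {n : ℕ} (A : Matrix (Fin n) (Fin n) ℝ) : ℝ :=
  sSup {r : ℝ | ∃ x : Fin n → ℝ, vecNorm x ≤ 1 ∧ r = vecNorm (A.mulVec x)}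


/-!
Write `d = uₗ - uₗ₊₁`. The Newton equation says `∇r(uₗ) d = r(uₗ)`, and since `r` is cubic the
Taylor remainder is exact: `r(uₗ₊₁)ᵢ = β dᵢ² (2 uₗᵢ + uₗ₊₁ᵢ)`.

The matrix `A(u*) - λI` is a symmetric Z-matrix annihilating the positive vector `u*`, hence
positive semidefinite; since `∇r(u) = A(u*) - λI + diag(3βu² - βu*²)`, for `u ≥ u*` we get
`dᵀ∇r(u)d ≥ 2β min(u*)² ‖d‖²`, and Cauchy–Schwarz gives `‖d‖ ≤ ‖r(uₗ)‖ / (2β min(u*)²)`.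

On the other side, `∇r(uₗ) - ∇r(m)` is diagonal for the midpoint `m` of `uₗ` and `uₗ₊₁`, so the
Lipschitz bound controls each `3β(uₗᵢ² - mᵢ²)` by `M₁‖d‖/2`, which dominates the remainder:
`|r(uₗ₊₁)ᵢ| ≤ (M₁/2)‖d‖ |dᵢ|`. Hence `‖r(uₗ₊₁)‖ ≤ (M₁/2)‖d‖² ≤ M₁ ‖r(uₗ)‖² / (8β² min(u*)⁴)`.
-/

namespace Matrix

variable {ι : Type*} [Fintype ι]

theorem posSemidef_of_isSymm_of_mulVec_eq_zero {M : Matrix ι ι ℝ} (hM : M.IsSymm)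
    (hoff : ∀ i j, i ≠ j → M i j ≤ 0) {u : ι → ℝ} (hu : ∀ i, 0 < u i) (hMu : M *ᵥ u = 0) :
    M.PosSemidef := by
  refine .of_dotProduct_mulVec_nonneg (isHermitian_iff_isSymm.mpr hM) fun d => ?_
  -- AM-GM on each off-diagonal pair, with weights chosen so that the bounds sum to `0` by `M u = 0`
  have pair : ∀ i j, M i j * u j * (d i ^ 2 / (2 * u i)) + M j i * u i * (d j ^ 2 / (2 * u j))
      ≤ d i * (M i j * d j) := by
    intro i j
    have hui := hu i
    have huj := hu j
    rcases eq_or_ne i j with rfl | hij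
    · refine le_of_eq ?_
      field_simp
      ring
    · have amgm : d i * d j ≤ u j * d i ^ 2 / (2 * u i) + u i * d j ^ 2 / (2 * u j) := by
        rw [div_add_div _ _ (by positivity) (by positivity), le_div_iff₀ (by positivity)]
        nlinarith [sq_nonneg (u j * d i - u i * d j)]
      have hsymm : M j i = M i j := by simpa using congrFun (congrFun hM i) j
      have := mul_le_mul_of_nonpos_left amgm (hoff i j hij)
      rw [hsymm]
      linear_combination this
  have row : ∀ i, ∑ j, M i j * u j = 0 := fun i => by
    simpa [mulVec, dotProduct] using congrFun hMu i
  calc (0 : ℝ)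
      = ∑ i, ∑ j, (M i j * u j * (d i ^ 2 / (2 * u i)) + M j i * u i * (d j ^ 2 / (2 * u j))) := by
        simp only [Finset.sum_add_distrib, ← Finset.sum_mul, row, zero_mul, zero_add]
        rw [Finset.sum_comm]
        simp only [← Finset.sum_mul, row, zero_mul, Finset.sum_const_zero]
    _ ≤ ∑ i, ∑ j, d i * (M i j * d j) := by gcongr with i _ j _; exact pair i j
    _ = star d ⬝ᵥ (M *ᵥ d) := by simp [dotProduct, mulVec, Finset.mul_sum]

end Matrix

lemma midpoint_apply_eq_add_div_two {ι : Type*} (x y : ι → ℝ) (i : ι) :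
    midpoint ℝ x y i = (x i + y i) / 2 := by
  simp [midpoint_eq_smul_add, invOf_eq_inv]
  ring

section Norms

variable {n : ℕ}

lemma vecNorm_nonneg (u : Fin n → ℝ) : 0 ≤ vecNorm u := Real.sqrt_nonneg _

lemma vecNorm_sq (u : Fin n → ℝ) : vecNorm u ^ 2 = ∑ i, u i ^ 2 :=
  Real.sq_sqrt (by positivity)

lemma abs_le_vecNorm (u : Fin n → ℝ) (i : Fin n) : |u i| ≤ vecNorm u :=
  Real.abs_le_sqrt (Finset.single_le_sum (fun j _ => sq_nonneg (u j)) (Finset.mem_univ i))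

lemma vecNorm_pos_of_apply_ne_zero {u : Fin n → ℝ} {i : Fin n} (hi : u i ≠ 0) :
    0 < vecNorm u :=
  (abs_pos.mpr hi).trans_le (abs_le_vecNorm u i)

lemma vecNorm_smul (c : ℝ) (u : Fin n → ℝ) : vecNorm (c • u) = |c| * vecNorm u := by
  simp only [vecNorm, Pi.smul_apply, smul_eq_mul, mul_pow, ← Finset.mul_sum]
  rw [Real.sqrt_mul (sq_nonneg c), Real.sqrt_sq_eq_abs]

lemma vecNorm_single (i : Fin n) (a : ℝ) : vecNorm (Pi.single i a) = |a| := by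
  rw [vecNorm, Finset.sum_eq_single i (fun j _ hj => by simp [hj]) (by simp), Pi.single_eq_same,
    Real.sqrt_sq_eq_abs]

lemma vecNorm_le_mul_of_abs_le {a b : Fin n → ℝ} {c : ℝ} (hc : 0 ≤ c)
    (h : ∀ i, |a i| ≤ c * |b i|) : vecNorm a ≤ c * vecNorm b := by
  rw [← Real.sqrt_sq hc, vecNorm, vecNorm, ← Real.sqrt_mul (sq_nonneg c), Finset.mul_sum]
  gcongr with i
  rw [← sq_abs (a i), ← sq_abs (b i), ← mul_pow]
  exact pow_le_pow_left₀ (abs_nonneg _) (h i) 2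

lemma dotProduct_le_vecNorm_mul (a b : Fin n → ℝ) : a ⬝ᵥ b ≤ vecNorm a * vecNorm b :=
  Real.sum_mul_le_sqrt_mul_sqrt _ a b

lemma abs_le_matNorm_diagonal (w : Fin n → ℝ) (i : Fin n) :
    |w i| ≤ matNorm (Matrix.diagonal w) := by
  refine le_csSup ⟨vecNorm w, ?_⟩ ⟨Pi.single i 1, by simp [vecNorm_single], ?_⟩
  · rintro _ ⟨x, hx, rfl⟩
    refine (vecNorm_le_mul_of_abs_le zero_le_one fun j => ?_).trans_eq (one_mul _)
    rw [Matrix.mulVec_diagonal, abs_mul, one_mul]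
    exact mul_le_of_le_one_right (abs_nonneg _) ((abs_le_vecNorm x j).trans hx)
  · have hcol : Matrix.diagonal w *ᵥ Pi.single i 1 = Pi.single i (w i) := by
      ext j
      rcases eq_or_ne j i with rfl | hj <;> simp [Matrix.mulVec_diagonal, *]
    rw [hcol, vecNorm_single]

lemma matNorm_nonneg (A : Matrix (Fin n) (Fin n) ℝ) : 0 ≤ matNorm A :=
  Real.sSup_nonneg fun _ ⟨_, _, hr⟩ => hr ▸ vecNorm_nonneg _

end Norms

lemma IsNsMMat.apply_nonpos {n : ℕ} {B : Matrix (Fin n) (Fin n) ℝ} (hB : IsNsMMat B)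
    {i j : Fin n} (hij : i ≠ j) : B i j ≤ 0 := by
  obtain ⟨s, A, hA, -, rfl⟩ := hB
  simpa [Matrix.one_apply_ne hij] using hA i j

noncomputable def eigResidual {n : ℕ} (β lam : ℝ) (B : Matrix (Fin n) (Fin n) ℝ) (u : Fin n → ℝ) :
    Fin n → ℝ :=
  (AU β B u) *ᵥ u - lam • u

section Newton

variable {n : ℕ} {β lam : ℝ} {B : Matrix (Fin n) (Fin n) ℝ}

lemma eigResidual_apply (u : Fin n → ℝ) (i : Fin n) :
    eigResidual β lam B u i = β * u i ^ 3 + (B *ᵥ u) i - lam * u i := by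
  simp only [eigResidual, AU, Matrix.add_mulVec, Matrix.smul_mulVec, Matrix.mulVec_diagonal,
    Pi.sub_apply, Pi.add_apply, Pi.smul_apply, smul_eq_mul]
  ring

lemma JU_mulVec_apply (x z : Fin n → ℝ) (i : Fin n) :
    (JU β lam B x *ᵥ z) i = 3 * β * x i ^ 2 * z i + (B *ᵥ z) i - lam * z i := by
  simp only [JU, Matrix.sub_mulVec, Matrix.add_mulVec, Matrix.smul_mulVec, Matrix.one_mulVec,
    Matrix.mulVec_diagonal, Pi.sub_apply, Pi.add_apply, Pi.smul_apply, smul_eq_mul]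
  ring

lemma JU_eq_add_diagonal (u x : Fin n → ℝ) :
    JU β lam B x =
      (AU β B u - lam • 1) + Matrix.diagonal fun i => 3 * β * x i ^ 2 - β * u i ^ 2 := by
  ext i j
  rcases eq_or_ne i j with rfl | hij
  · simp only [JU, AU, Matrix.add_apply, Matrix.sub_apply, Matrix.smul_apply, smul_eq_mul,
      Matrix.diagonal_apply_eq, Matrix.one_apply_eq]
    ring
  · simp [JU, AU, hij]

lemma JU_sub_JU (x y : Fin n → ℝ) :
    JU β lam B x - JU β lam B y = Matrix.diagonal fun i => 3 * β * (x i ^ 2 - y i ^ 2) := by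
  ext i j
  rcases eq_or_ne i j with rfl | hij
  · simp only [JU, Matrix.add_apply, Matrix.sub_apply, Matrix.smul_apply, smul_eq_mul,
      Matrix.diagonal_apply_eq]
    ring
  · simp [JU, hij]

lemma JU_mulVec_sub_of_newton {x y : Fin n → ℝ}
    (hstep : JU β lam B x *ᵥ y = fun i => 2 * β * x i ^ 3) :
    JU β lam B x *ᵥ (x - y) = eigResidual β lam B x := by
  ext i
  have := congrFun hstep i
  rw [JU_mulVec_apply] at this
  rw [JU_mulVec_apply, eigResidual_apply, Matrix.mulVec_sub]
  simp only [Pi.sub_apply]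
  linear_combination -this

lemma eigResidual_apply_of_newton {x y : Fin n → ℝ}
    (hstep : JU β lam B x *ᵥ y = fun i => 2 * β * x i ^ 3) (i : Fin n) :
    eigResidual β lam B y i = β * (x i - y i) ^ 2 * (2 * x i + y i) := by
  have := congrFun hstep i
  rw [JU_mulVec_apply] at this
  rw [eigResidual_apply]
  linear_combination this

lemma AU_sub_smul_one_posSemidef (hB : B.IsSymm) (hoff : ∀ i j, i ≠ j → B i j ≤ 0)
    {u : Fin n → ℝ} (hu : ∀ i, 0 < u i) (heq : AU β B u *ᵥ u = lam • u) :
    (AU β B u - lam • 1).PosSemidef := by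
  refine Matrix.posSemidef_of_isSymm_of_mulVec_eq_zero
    ((((Matrix.isSymm_diagonal _).smul β).add hB).sub (Matrix.isSymm_one.smul lam))
    (fun i j hij => ?_) hu (by rw [Matrix.sub_mulVec, heq, Matrix.smul_mulVec, Matrix.one_mulVec,
      sub_self])
  simpa [AU, hij] using hoff i j hij

lemma sq_vecNorm_le_dotProduct_JU_mulVec (hB : B.IsSymm) (hoff : ∀ i j, i ≠ j → B i j ≤ 0)
    (hβ : 0 ≤ β) {u : Fin n → ℝ} (hu : ∀ i, 0 < u i) (heq : AU β B u *ᵥ u = lam • u) {m : ℝ}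
    (hm : 0 ≤ m) (hmu : ∀ i, m ≤ u i) {x : Fin n → ℝ} (hux : ∀ i, u i ≤ x i) (d : Fin n → ℝ) :
    2 * β * m ^ 2 * vecNorm d ^ 2 ≤ d ⬝ᵥ (JU β lam B x *ᵥ d) := by
  have hdiag : ∀ i, 2 * β * m ^ 2 ≤ 3 * β * x i ^ 2 - β * u i ^ 2 := fun i => by
    have hmu2 : m ^ 2 ≤ u i ^ 2 := pow_le_pow_left₀ hm (hmu i) 2
    have hux2 : u i ^ 2 ≤ x i ^ 2 := pow_le_pow_left₀ (hu i).le (hux i) 2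
    nlinarith
  have hquad := (AU_sub_smul_one_posSemidef hB hoff hu heq).dotProduct_mulVec_nonneg d
  rw [star_trivial] at hquad
  rw [JU_eq_add_diagonal u, Matrix.add_mulVec, dotProduct_add, vecNorm_sq, Finset.mul_sum]
  refine le_add_of_nonneg_of_le hquad (Finset.sum_le_sum fun i _ => ?_)
  rw [Matrix.mulVec_diagonal]
  nlinarith [hdiag i, sq_nonneg (d i)]

lemma vecNorm_sub_le_of_newton (hB : B.IsSymm) (hoff : ∀ i j, i ≠ j → B i j ≤ 0) (hβ : 0 < β)
    {u : Fin n → ℝ} (hu : ∀ i, 0 < u i) (heq : AU β B u *ᵥ u = lam • u) {m : ℝ}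
    (hm : 0 < m) (hmu : ∀ i, m ≤ u i) {x y : Fin n → ℝ} (hux : ∀ i, u i ≤ x i)
    (hstep : JU β lam B x *ᵥ y = fun i => 2 * β * x i ^ 3) :
    vecNorm (x - y) ≤ vecNorm (eigResidual β lam B x) / (2 * β * m ^ 2) := by
  have hcoer := sq_vecNorm_le_dotProduct_JU_mulVec hB hoff hβ.le hu heq hm.le hmu hux (x - y)
  rw [JU_mulVec_sub_of_newton hstep] at hcoer
  have hcs := dotProduct_le_vecNorm_mul (x - y) (eigResidual β lam B x)
  rcases (vecNorm_nonneg (x - y)).eq_or_lt with h0 | hpos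
  · rw [← h0]
    exact div_nonneg (vecNorm_nonneg _) (by positivity)
  · rw [le_div_iff₀ (by positivity)]
    nlinarith

lemma vecNorm_eigResidual_le_of_newton (hβ : 0 ≤ β) {x y : Fin n → ℝ}
    (hstep : JU β lam B x *ᵥ y = fun i => 2 * β * x i ^ 3) (hy : ∀ i, 0 ≤ y i)
    (hyx : ∀ i, y i ≤ x i) {M₁ : ℝ}
    (hLip : matNorm (JU β lam B x - JU β lam B (midpoint ℝ x y)) ≤
      M₁ * vecNorm (x - midpoint ℝ x y)) :
    vecNorm (eigResidual β lam B y) ≤ M₁ / 2 * vecNorm (x - y) ^ 2 := by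
  have hmid : vecNorm (x - midpoint ℝ x y) = vecNorm (x - y) / 2 := by
    rw [left_sub_midpoint, vecNorm_smul, invOf_eq_inv, abs_of_pos (by norm_num)]
    ring
  rw [hmid, JU_sub_JU] at hLip
  simp only [midpoint_apply_eq_add_div_two] at hLip
  have hJ : ∀ i, 3 * β * (x i ^ 2 - ((x i + y i) / 2) ^ 2) ≤ M₁ * (vecNorm (x - y) / 2) :=
    fun i => (le_abs_self _).trans ((abs_le_matNorm_diagonal _ i).trans hLip)
  have hpt : ∀ i, |eigResidual β lam B y i| ≤ M₁ * (vecNorm (x - y) / 2) * |x i - y i| :=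
    fun i => by
      have hxy := hyx i
      rw [eigResidual_apply_of_newton hstep,
        abs_of_nonneg (mul_nonneg (mul_nonneg hβ (sq_nonneg _)) (by linarith [hy i])),
        abs_of_nonneg (by linarith)]
      calc β * (x i - y i) ^ 2 * (2 * x i + y i)
          ≤ 3 * β * (x i ^ 2 - ((x i + y i) / 2) ^ 2) * (x i - y i) := by
            -- the difference is `β (x i - y i) ^ 3 / 4`
            nlinarith [mul_nonneg hβ (pow_nonneg (sub_nonneg.mpr hxy) 3)]
        _ ≤ M₁ * (vecNorm (x - y) / 2) * (x i - y i) :=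
            mul_le_mul_of_nonneg_right (hJ i) (sub_nonneg.mpr hxy)
  calc vecNorm (eigResidual β lam B y) ≤ M₁ * (vecNorm (x - y) / 2) * vecNorm (x - y) :=
        vecNorm_le_mul_of_abs_le ((matNorm_nonneg _).trans hLip) hpt
    _ = M₁ / 2 * vecNorm (x - y) ^ 2 := by ring

end Newton

theorem stmt10_general {n : ℕ} [NeZero n] (B : Matrix (Fin n) (Fin n) ℝ) (β lam M₁ : ℝ)
    (hB1 : B.IsSymm) (hB3 : IsNsMMat B) (hβ : 0 < β)
    (ustar : Fin n → ℝ) (hstar : ∀ i, 0 < ustar i)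
    (hstareq : (AU β B ustar).mulVec ustar = lam • ustar)
    (v : ℕ → Fin n → ℝ)
    (hrec : ∀ k, (JU β lam B (v k)).mulVec (v (k + 1)) = fun i => 2 * β * (v k i) ^ 3)
    (hLip : ∀ x y : Fin n → ℝ,
      (∀ i, ustar i ≤ x i ∧ x i ≤ v 0 i) → (∀ i, ustar i ≤ y i ∧ y i ≤ v 0 i) →
      matNorm (JU β lam B x - JU β lam B y) ≤ M₁ * vecNorm (x - y)) :
    ∀ l, (∀ i, ustar i < v (l + 1) i ∧ v (l + 1) i < v l i ∧ v l i < v 0 i) →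
      vecNorm ((AU β B (v (l + 1))).mulVec (v (l + 1)) - lam • v (l + 1)) ≤
        (M₁ / (8 * β ^ 2 * (⨅ i, ustar i) ^ 4)) *
          vecNorm ((AU β B (v l)).mulVec (v l) - lam • v l) ^ 2 := by
  intro l hl
  set x := v l
  set y := v (l + 1)
  set m := ⨅ i, ustar i
  have hmu : ∀ i, m ≤ ustar i := ciInf_le (Finite.bddBelow_range ustar)
  have hm : 0 < m := by
    obtain ⟨i, hi⟩ := exists_eq_ciInf_of_finite (f := ustar)
    exact (hstar i).trans_eq hi
  have hx : ∀ i, ustar i ≤ x i ∧ x i ≤ v 0 i := fun i =>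
    ⟨((hl i).1.trans (hl i).2.1).le, (hl i).2.2.le⟩
  have hmid : ∀ i, ustar i ≤ midpoint ℝ x y i ∧ midpoint ℝ x y i ≤ v 0 i := fun i => by
    obtain ⟨h1, h2, h3⟩ := hl i
    rw [midpoint_apply_eq_add_div_two]
    constructor <;> linarith
  have hLip_mid := hLip x (midpoint ℝ x y) hx hmid
  have hM₁ : 0 ≤ M₁ := by
    refine nonneg_of_mul_nonneg_left ((matNorm_nonneg _).trans hLip_mid)
      (vecNorm_pos_of_apply_ne_zero (i := 0) ?_)
    rw [Pi.sub_apply, midpoint_apply_eq_add_div_two]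
    exact ne_of_gt (by linarith [(hl 0).2.1])
  have hdx := vecNorm_sub_le_of_newton hB1 (fun i j => hB3.apply_nonpos) hβ hstar hstareq hm hmu
    (fun i => (hx i).1) (hrec l)
  have hry := vecNorm_eigResidual_le_of_newton hβ.le (hrec l)
    (fun i => ((hstar i).trans (hl i).1).le) (fun i => (hl i).2.1.le) hLip_mid
  calc vecNorm (eigResidual β lam B y) ≤ M₁ / 2 * vecNorm (x - y) ^ 2 := hry
    _ ≤ M₁ / 2 * (vecNorm (eigResidual β lam B x) / (2 * β * m ^ 2)) ^ 2 := by
        gcongr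
        exact vecNorm_nonneg _
    _ = M₁ / (8 * β ^ 2 * m ^ 4) * vecNorm (eigResidual β lam B x) ^ 2 := by
        field_simp
        ring

theorem stmt10 {n : ℕ} [NeZero n] (B : Matrix (Fin n) (Fin n) ℝ) (β lam M₁ : ℝ)
    (hB1 : B.IsSymm) (hB2 : MatIrred B) (hB3 : IsNsMMat B) (hβ : 0 < β)
    (hlam : smallestEig B < lam)
    (ustar : Fin n → ℝ) (hstar : ∀ i, 0 < ustar i)
    (hstareq : (AU β B ustar).mulVec ustar = lam • ustar)
    (v : ℕ → Fin n → ℝ)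
    (hrec : ∀ k, (JU β lam B (v k)).mulVec (v (k + 1)) = fun i => 2 * β * (v k i) ^ 3)
    (hLip : ∀ x y : Fin n → ℝ,
      (∀ i, ustar i ≤ x i ∧ x i ≤ v 0 i) → (∀ i, ustar i ≤ y i ∧ y i ≤ v 0 i) →
      matNorm (JU β lam B x - JU β lam B y) ≤ M₁ * vecNorm (x - y)) :
    ∀ l, (∀ i, ustar i < v (l + 1) i ∧ v (l + 1) i < v l i ∧ v l i < v 0 i) →
      vecNorm ((AU β B (v (l + 1))).mulVec (v (l + 1)) - lam • v (l + 1)) ≤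
        (M₁ / (8 * β ^ 2 * (⨅ i, ustar i) ^ 4)) *
          vecNorm ((AU β B (v l)).mulVec (v l) - lam • v l) ^ 2 :=
  stmt10_general B β lam M₁ hB1 hB3 hβ ustar hstar hstareq v hrec hLip
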